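/- Let W = {x in the closed ball of radius r : Ψⁿ(x) lies in the closed ball of radius r for all n ≥ 0}. Then for every pair x, y ∈ W one has ‖x₁ − y₁‖_Q ≤ ‖x₂ − y₂‖_Q. -/
import Mathlib


/-- The `Q`-norm `‖x‖_Q = √(Q x x)` associated to a bilinear form `Q`. -/
noncomputable def normQ {E : Type*} [AddCommGroup E] [Module ℝ E]
    (Q : E →ₗ[ℝ] E →ₗ[ℝ] ℝ) (x : E) : ℝ :=
  Real.sqrt (Q x x)

section aux

variable {E : Type*} [AddCommGroup E] [Module ℝ E] (Q : E →ₗ[ℝ] E →ₗ[ℝ] ℝ)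

lemma q_nonneg (hQpos : ∀ x : E, x ≠ 0 → 0 < Q x x) (x : E) : 0 ≤ Q x x := by
  rcases eq_or_ne x 0 with h | h
  · simp [h]
  · exact (hQpos x h).le

lemma normQ_nonneg (x : E) : 0 ≤ normQ Q x := Real.sqrt_nonneg _

lemma normQ_sq (hQpos : ∀ x : E, x ≠ 0 → 0 < Q x x) (x : E) :
    normQ Q x ^ 2 = Q x x := Real.sq_sqrt (q_nonneg Q hQpos x)

lemma normQ_le_of_sq_le (hQpos : ∀ x : E, x ≠ 0 → 0 < Q x x) {x : E} {c : ℝ}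
    (hc : 0 ≤ c) (h : Q x x ≤ c ^ 2) : normQ Q x ≤ c := by
  have h1 : Real.sqrt (Q x x) ≤ Real.sqrt (c ^ 2) := Real.sqrt_le_sqrt h
  rwa [Real.sqrt_sq hc] at h1

lemma q_cauchy (hQsymm : ∀ x y : E, Q x y = Q y x)
    (hQpos : ∀ x : E, x ≠ 0 → 0 < Q x x) (x y : E) :
    Q x y ≤ normQ Q x * normQ Q y := by
  have hxx := q_nonneg Q hQpos x
  have hyy := q_nonneg Q hQpos y
  rcases eq_or_ne y 0 with h | h
  · simp only [h, map_zero]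
    exact mul_nonneg (normQ_nonneg Q x) (normQ_nonneg Q _)
  · have hy : 0 < Q y y := hQpos y h
    set t := Q x y / Q y y with ht
    have h0 : 0 ≤ Q (x - t • y) (x - t • y) := q_nonneg Q hQpos _
    have hexp : Q (x - t • y) (x - t • y)
        = Q x x - 2 * t * Q x y + t ^ 2 * Q y y := by
      simp only [map_sub, map_smul, LinearMap.sub_apply, LinearMap.smul_apply,
        smul_eq_mul, hQsymm y x]
      ring
    have hmul : t * Q y y = Q x y := div_mul_cancel₀ _ hy.ne'
    have hsq : Q x y ^ 2 ≤ Q x x * Q y y := by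
      rw [hexp] at h0
      nlinarith [h0]
    have h1 : Q x y ≤ Real.sqrt (Q x x * Q y y) := by
      calc Q x y ≤ |Q x y| := le_abs_self _
        _ = Real.sqrt (Q x y ^ 2) := (Real.sqrt_sq_eq_abs _).symm
        _ ≤ Real.sqrt (Q x x * Q y y) := Real.sqrt_le_sqrt hsq
    rwa [Real.sqrt_mul hxx] at h1

lemma normQ_add_le (hQsymm : ∀ x y : E, Q x y = Q y x)
    (hQpos : ∀ x : E, x ≠ 0 → 0 < Q x x) (x y : E) :
    normQ Q (x + y) ≤ normQ Q x + normQ Q y := by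
  apply normQ_le_of_sq_le Q hQpos (add_nonneg (normQ_nonneg Q x) (normQ_nonneg Q y))
  have hcs := q_cauchy Q hQsymm hQpos x y
  have hx := normQ_sq Q hQpos x
  have hy := normQ_sq Q hQpos y
  have hexp : Q (x + y) (x + y) = Q x x + 2 * Q x y + Q y y := by
    simp only [map_add, LinearMap.add_apply, hQsymm y x]
    ring
  nlinarith

lemma normQ_neg (x : E) : normQ Q (-x) = normQ Q x := by
  unfold normQ; simp

lemma normQ_rev (hQsymm : ∀ x y : E, Q x y = Q y x)
    (hQpos : ∀ x : E, x ≠ 0 → 0 < Q x x) (x y : E) :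
    normQ Q x ≤ normQ Q (x + y) + normQ Q y := by
  have h := normQ_add_le Q hQsymm hQpos (x + y) (-y)
  simp only [add_neg_cancel_right, normQ_neg] at h
  exact h

end aux

/-- Let `W = {x in the closed ball of radius r : Ψⁿ x stays in the closed
ball for all n ≥ 0}`. Then for every pair `x, y ∈ W` one has `‖x₁ − y₁‖_Q ≤ ‖x₂ − y₂‖_Q`. -/
theorem stmt6
 {E : Type*} [NormedAddCommGroup E] [NormedSpace ℝ E] [CompleteSpace E]
    -- Q is a bounded symmetric positive definite bilinear form on E
    (Q : E →ₗ[ℝ] E →ₗ[ℝ] ℝ)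
    (hQsymm : ∀ x y : E, Q x y = Q y x)
    (hQpos : ∀ x : E, x ≠ 0 → 0 < Q x x)
    (C_Q : ℝ) (hCQpos : 0 < C_Q)
    (hQbd : ∀ x y : E, |Q x y| ≤ C_Q * ‖x‖ * ‖y‖)
    -- E = E₁ ⊕ E₂ is a splitting into Q-orthogonal subspaces, with projections P₁, P₂
    (E₁ E₂ : Submodule ℝ E)
    (hinf : E₁ ⊓ E₂ = ⊥) (hsup : E₁ ⊔ E₂ = ⊤)
    (horth : ∀ a ∈ E₁, ∀ b ∈ E₂, Q a b = 0)
    (P₁ P₂ : E →ₗ[ℝ] E)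
    (hP₁mem : ∀ x : E, P₁ x ∈ E₁) (hP₂mem : ∀ x : E, P₂ x ∈ E₂)
    (hPsum : ∀ x : E, P₁ x + P₂ x = x)
    -- T is a bounded linear map preserving the splitting, expanding on E₁, contracting on E₂
    (T : E →L[ℝ] E)
    (hT₁ : ∀ x ∈ E₁, T x ∈ E₁) (hT₂ : ∀ x ∈ E₂, T x ∈ E₂)
    (lam mu : ℝ) (hlam : 1 < lam) (hmu0 : 0 < mu) (hmulam : mu < lam)
    (hTexp : ∀ x ∈ E₁, lam * normQ Q x ≤ normQ Q (T x))
    (hTcon : ∀ x ∈ E₂, normQ Q (T x) ≤ mu * normQ Q x)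
    -- Ψ is continuous with Ψ 0 = 0
    (Ψ : E → E) (hΨcont : Continuous Ψ) (hΨ0 : Ψ 0 = 0)
    -- ε and r
    (ε : ℝ) (hε : 0 < ε) (hε1 : 1 < lam - 2 * ε)
    (hε2 : 1 < (lam - 2 * ε) / (mu + 2 * ε))
    (r : ℝ) (hr : 0 < r)
    (hLip : ∀ x y : E, ‖x‖ ≤ r → ‖y‖ ≤ r →
      normQ Q ((Ψ x - T x) - (Ψ y - T y)) ≤ ε * normQ Q (x - y)) :
    ∀ x y : E,
      (∀ n : ℕ, ‖Ψ^[n] x‖ ≤ r) → (∀ n : ℕ, ‖Ψ^[n] y‖ ≤ r) →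
      normQ Q (P₁ x - P₁ y) ≤ normQ Q (P₂ x - P₂ y) := by
  -- uniqueness of the splitting decomposition
  have huniq : ∀ u ∈ E₁, ∀ v ∈ E₂, P₁ (u + v) = u ∧ P₂ (u + v) = v := by
    intro u hu v hv
    have hw := hPsum (u + v)
    have h2 : P₁ (u + v) - u = v - P₂ (u + v) := by
      rw [sub_eq_sub_iff_add_eq_add, hw]; abel
    have hmem : P₁ (u + v) - u ∈ E₁ ⊓ E₂ := by
      refine ⟨E₁.sub_mem (hP₁mem _) hu, ?_⟩
      rw [h2]
      exact E₂.sub_mem hv (hP₂mem _)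
    rw [hinf, Submodule.mem_bot] at hmem
    have h1 : P₁ (u + v) = u := by rwa [sub_eq_zero] at hmem
    refine ⟨h1, ?_⟩
    have := hPsum (u + v)
    rw [h1] at this
    linear_combination (norm := abel) this
  -- Pythagoras
  have hpyth : ∀ u ∈ E₁, ∀ v ∈ E₂, Q (u + v) (u + v) = Q u u + Q v v := by
    intro u hu v hv
    have h1 : Q u v = 0 := horth u hu v hv
    have h2 : Q v u = 0 := by rw [hQsymm]; exact h1
    simp only [map_add, LinearMap.add_apply, h1, h2]
    ring
  -- projection bounds
  have hproj1 : ∀ z : E, normQ Q (P₁ z) ≤ normQ Q z := by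
    intro z
    apply normQ_le_of_sq_le Q hQpos (normQ_nonneg Q z)
    rw [normQ_sq Q hQpos]
    conv_rhs => rw [← hPsum z]
    rw [hpyth _ (hP₁mem z) _ (hP₂mem z)]
    linarith [q_nonneg Q hQpos (P₂ z)]
  have hproj2 : ∀ z : E, normQ Q (P₂ z) ≤ normQ Q z := by
    intro z
    apply normQ_le_of_sq_le Q hQpos (normQ_nonneg Q z)
    rw [normQ_sq Q hQpos]
    conv_rhs => rw [← hPsum z]
    rw [hpyth _ (hP₁mem z) _ (hP₂mem z)]
    linarith [q_nonneg Q hQpos (P₁ z)]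
  intro x y hx hy
  by_contra hcon
  push_neg at hcon
  set A : ℕ → ℝ := fun n => normQ Q (P₁ (Ψ^[n] x - Ψ^[n] y)) with hA
  set B : ℕ → ℝ := fun n => normQ Q (P₂ (Ψ^[n] x - Ψ^[n] y)) with hB
  have h00 : B 0 < A 0 := by
    simpa only [hA, hB, Function.iterate_zero, id_eq, map_sub] using hcon
  have hμε : 0 < mu + 2 * ε := by linarith
  have hlamε : mu + 2 * ε < lam - 2 * ε := by
    rw [lt_div_iff₀ hμε] at hε2; linarith
  -- one-step estimate
  have hstep : ∀ u v : E, ‖u‖ ≤ r → ‖v‖ ≤ r →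
      normQ Q (P₂ (u - v)) ≤ normQ Q (P₁ (u - v)) →
      (lam - 2 * ε) * normQ Q (P₁ (u - v)) ≤ normQ Q (P₁ (Ψ u - Ψ v)) ∧
      normQ Q (P₂ (Ψ u - Ψ v)) ≤ normQ Q (P₁ (Ψ u - Ψ v)) := by
    intro u v hur hvr hba
    set d := u - v with hd
    set R := (Ψ u - T u) - (Ψ v - T v) with hR
    have hsplit : Ψ u - Ψ v = (T (P₁ d) + T (P₂ d)) + R := by
      have h1 : T (P₁ d) + T (P₂ d) = T d := by
        rw [← map_add]
        congr 1
        exact hPsum d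
      rw [h1, hR, hd, map_sub]
      abel
    have hRQ : normQ Q R ≤ ε * normQ Q d := hLip u v hur hvr
    have ha1 : P₁ (Ψ u - Ψ v) = T (P₁ d) + P₁ R := by
      rw [hsplit, map_add]
      congr 1
      exact (huniq _ (hT₁ _ (hP₁mem d)) _ (hT₂ _ (hP₂mem d))).1
    have hb1 : P₂ (Ψ u - Ψ v) = T (P₂ d) + P₂ R := by
      rw [hsplit, map_add]
      congr 1
      exact (huniq _ (hT₁ _ (hP₁mem d)) _ (hT₂ _ (hP₂mem d))).2
    have hA0n : 0 ≤ normQ Q (P₁ d) := normQ_nonneg Q _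
    have hdle : normQ Q d ≤ 2 * normQ Q (P₁ d) := by
      have h1 : normQ Q d ≤ normQ Q (P₁ d) + normQ Q (P₂ d) := by
        conv_lhs => rw [← hPsum d]
        exact normQ_add_le Q hQsymm hQpos _ _
      linarith
    have hεd : ε * normQ Q d ≤ ε * (2 * normQ Q (P₁ d)) :=
      mul_le_mul_of_nonneg_left hdle hε.le
    have hPR1 : normQ Q (P₁ R) ≤ 2 * ε * normQ Q (P₁ d) := by
      have := hproj1 R
      linarith
    have hPR2 : normQ Q (P₂ R) ≤ 2 * ε * normQ Q (P₁ d) := by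
      have := hproj2 R
      linarith
    have hgrow : (lam - 2 * ε) * normQ Q (P₁ d) ≤ normQ Q (P₁ (Ψ u - Ψ v)) := by
      have h1 : normQ Q (T (P₁ d)) ≤ normQ Q (T (P₁ d) + P₁ R) + normQ Q (P₁ R) :=
        normQ_rev Q hQsymm hQpos _ _
      have h2 : lam * normQ Q (P₁ d) ≤ normQ Q (T (P₁ d)) :=
        hTexp _ (hP₁mem d)
      rw [ha1]
      linarith
    refine ⟨hgrow, ?_⟩
    have h1 : normQ Q (T (P₂ d) + P₂ R) ≤ normQ Q (T (P₂ d)) + normQ Q (P₂ R) :=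
      normQ_add_le Q hQsymm hQpos _ _
    have h2 : normQ Q (T (P₂ d)) ≤ mu * normQ Q (P₂ d) := hTcon _ (hP₂mem d)
    have h3 : mu * normQ Q (P₂ d) ≤ mu * normQ Q (P₁ d) := mul_le_mul_of_nonneg_left hba hmu0.le
    rw [hb1]
    calc normQ Q (T (P₂ d) + P₂ R) ≤ (mu + 2 * ε) * normQ Q (P₁ d) := by linarith
      _ ≤ (lam - 2 * ε) * normQ Q (P₁ d) :=
            mul_le_mul_of_nonneg_right hlamε.le hA0n
      _ ≤ normQ Q (P₁ (Ψ u - Ψ v)) := hgrow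
  -- transfer to A, B
  have hstep' : ∀ n : ℕ, B n ≤ A n →
      (lam - 2 * ε) * A n ≤ A (n + 1) ∧ B (n + 1) ≤ A (n + 1) := by
    intro n hba
    have hiterx : Ψ^[n + 1] x = Ψ (Ψ^[n] x) := Function.iterate_succ_apply' Ψ n x
    have hitery : Ψ^[n + 1] y = Ψ (Ψ^[n] y) := Function.iterate_succ_apply' Ψ n y
    have hA1 : A (n + 1) = normQ Q (P₁ (Ψ (Ψ^[n] x) - Ψ (Ψ^[n] y))) := by
      rw [hA]
      simp only [hiterx, hitery]
    have hB1 : B (n + 1) = normQ Q (P₂ (Ψ (Ψ^[n] x) - Ψ (Ψ^[n] y))) := by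
      rw [hB]
      simp only [hiterx, hitery]
    have := hstep (Ψ^[n] x) (Ψ^[n] y) (hx n) (hy n) hba
    rw [hA1, hB1]
    exact this
  -- main induction
  have hmain : ∀ n : ℕ, B n ≤ A n ∧ (lam - 2 * ε) ^ n * A 0 ≤ A n := by
    intro n
    induction n with
    | zero => exact ⟨h00.le, by simp⟩
    | succ n ih =>
      obtain ⟨h1, h2⟩ := ih
      obtain ⟨h3, h4⟩ := hstep' n h1
      refine ⟨h4, ?_⟩
      have hpow : (0:ℝ) ≤ (lam - 2 * ε) ^ n := pow_nonneg (by linarith) n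
      calc (lam - 2 * ε) ^ (n + 1) * A 0
          = (lam - 2 * ε) * ((lam - 2 * ε) ^ n * A 0) := by ring
        _ ≤ (lam - 2 * ε) * A n :=
            mul_le_mul_of_nonneg_left h2 (by linarith)
        _ ≤ A (n + 1) := h3
  -- uniform bound
  have hbd : ∀ n : ℕ, A n ≤ Real.sqrt C_Q * (2 * r) := by
    intro n
    have h1 : A n ≤ normQ Q (Ψ^[n] x - Ψ^[n] y) := hproj1 _
    have h2 : ‖Ψ^[n] x - Ψ^[n] y‖ ≤ 2 * r := by
      calc ‖Ψ^[n] x - Ψ^[n] y‖ ≤ ‖Ψ^[n] x‖ + ‖Ψ^[n] y‖ := norm_sub_le _ _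
        _ ≤ 2 * r := by linarith [hx n, hy n]
    have h3 : normQ Q (Ψ^[n] x - Ψ^[n] y) ≤ Real.sqrt C_Q * (2 * r) := by
      apply normQ_le_of_sq_le Q hQpos
        (mul_nonneg (Real.sqrt_nonneg _) (by linarith))
      set z := Ψ^[n] x - Ψ^[n] y with hz
      have h4 : Q z z ≤ C_Q * ‖z‖ * ‖z‖ := (le_abs_self _).trans (hQbd z z)
      have h5 : (Real.sqrt C_Q * (2 * r)) ^ 2 = C_Q * (2 * r) ^ 2 := by
        rw [mul_pow, Real.sq_sqrt hCQpos.le]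
      have h6 : ‖z‖ * ‖z‖ ≤ (2 * r) * (2 * r) :=
        mul_le_mul h2 h2 (norm_nonneg z) (by linarith)
      have h7 : C_Q * (‖z‖ * ‖z‖) ≤ C_Q * ((2 * r) * (2 * r)) :=
        mul_le_mul_of_nonneg_left h6 hCQpos.le
      calc Q z z ≤ C_Q * ‖z‖ * ‖z‖ := h4
        _ = C_Q * (‖z‖ * ‖z‖) := by ring
        _ ≤ C_Q * ((2 * r) * (2 * r)) := h7
        _ = (Real.sqrt C_Q * (2 * r)) ^ 2 := by rw [h5]; ring
    linarith
  have hA0 : 0 < A 0 := lt_of_le_of_lt (normQ_nonneg Q _) h00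
  obtain ⟨n, hn⟩ := pow_unbounded_of_one_lt ((Real.sqrt C_Q * (2 * r)) / A 0) hε1
  have h1 := (hmain n).2
  have h2 := hbd n
  rw [div_lt_iff₀ hA0] at hn
  linarith
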